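/- Fix two runs of the chain, one started at z(0) = z and one at z(0) = z̃, with time-t marginal distributions denoted π_{t,S} and π̃_{t,S} on the coordinates indexed by a subset S. For f : ∏_{j∈N_i^κ} Z_j → ℝ let δ_j(f) = sup over z_{N_i^κ∖{j}} of sup over z_j, z_j' of |f(z_j, z_{N_i^κ∖{j}}) − f(z_j', z_{N_i^κ∖{j}})|. Say a nonnegative vector a = (a_1,…,a_n) is (t−1)-compatible if for every agent i, every integer κ ≥ 1, and every function f : ∏_{j∈N_i^κ} Z_j → ℝ, one has |E_{z_{N_i^κ} ∼ π_{t−1,N_i^κ}} f(z_{N_i^κ}) − E_{z_{N_i^κ} ∼ π̃_{t−1,N_i^κ}} f(z_{N_i^κ})| ≤ Σ_{j∈N_i^κ} a_j δ_j(f). If a is (t−1)-compatible, then a' = C a is t-compatible, where C ∈ ℝ^{n×n} is the matrix with entries C^z_ij (so a'_ℓ = Σ_{j∈N_ℓ} C^z_{ℓj} a_j). -/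
import Mathlib


open Finset

/-- Total variation distance `TV(p,q) = (1/2) ∑ₓ |p x − q x|` between two
finitely supported distributions. -/
noncomputable def TV {X : Type*} [Fintype X] (p q : X → ℝ) : ℝ :=
  (1 / 2) * ∑ x, |p x - q x|

/-- `stepDist K t z` is the distribution at time `t` of the Markov chain with transition
kernel `K` started at `z` at time `0`. -/
noncomputable def stepDist {Z : Type*} [Fintype Z] [DecidableEq Z]
    (K : Z → Z → ℝ) : ℕ → Z → Z → ℝ
  | 0, z, z' => if z' = z then 1 else 0
  | t + 1, z, z'' => ∑ z', stepDist K t z z' * K z' z''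

/-- The interaction matrix `C^z_{ij}`: `0` if `j ∉ N_i`, and for `j ∈ N_i` the sup over
`z_{N_i∖{j}}` and `z_j, z_j'` of `TV(P_i(·|z_j, z_{N_i∖{j}}), P_i(·|z_j', z_{N_i∖{j}}))`
(realized by varying only the `j`-th coordinate of a global configuration). -/
noncomputable def Cz {n : ℕ} (G : SimpleGraph (Fin n)) [DecidableRel G.Adj]
    (Z : Fin n → Type) [∀ k, Fintype (Z k)] [∀ k, Nonempty (Z k)]
    (P : ∀ k, (∀ j, Z j) → Z k → ℝ) (i j : Fin n) : ℝ :=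
  if j = i ∨ G.Adj i j then
    Finset.univ.sup' Finset.univ_nonempty
      (fun p : (∀ k, Z k) × Z j × Z j =>
        TV (P i (Function.update p.1 j p.2.1)) (P i (Function.update p.1 j p.2.2)))
  else 0

/-- `osc Z f j` is `δ_j(f)`, the oscillation (maximal variation) of `f` in its `j`-th
coordinate: the sup over configurations and over two values of the `j`-th coordinate of
the resulting difference of `f`. -/
noncomputable def osc {n : ℕ} (Z : Fin n → Type)
    [∀ k, Fintype (Z k)] [∀ k, Nonempty (Z k)]
    (f : (∀ j, Z j) → ℝ) (j : Fin n) : ℝ :=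
  Finset.univ.sup' Finset.univ_nonempty
    (fun p : (∀ k, Z k) × Z j × Z j =>
      |f (Function.update p.1 j p.2.1) - f (Function.update p.1 j p.2.2)|)

/-- A nonnegative vector `a` is `t`-compatible (for the two runs of the chain with kernel
`K` started at `z` and `z̃`) if for every agent `i`, every `κ ≥ 1` and every function `f`
depending only on the coordinates in the `κ`-hop neighborhood `N_i^κ` of `i`, the
difference of the expectations of `f` under the two time-`t` distributions is at most
`∑_{j} a_j δ_j(f)` (the terms with `j ∉ N_i^κ` vanish since `δ_j(f) = 0` there). -/
def Compatible {n : ℕ} (G : SimpleGraph (Fin n)) (Z : Fin n → Type)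
    [∀ k, Fintype (Z k)] [∀ k, Nonempty (Z k)] [∀ k, DecidableEq (Z k)]
    (K : (∀ j, Z j) → (∀ j, Z j) → ℝ) (z zt : ∀ j, Z j) (t : ℕ) (a : Fin n → ℝ) :
    Prop :=
  ∀ (i : Fin n) (κ : ℕ), 1 ≤ κ → ∀ f : (∀ j, Z j) → ℝ,
    (∀ w w' : ∀ j, Z j, (∀ j, G.Reachable i j → G.dist i j ≤ κ → w j = w' j) → f w = f w') →
    |(∑ w, stepDist K t z w * f w) - ∑ w, stepDist K t zt w * f w| ≤
      ∑ j, a j * osc Z f j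

set_option linter.unusedSectionVars false

lemma TV_nonneg {X : Type*} [Fintype X] (p q : X → ℝ) : 0 ≤ TV p q := by
  unfold TV; positivity

lemma TV_self {X : Type*} [Fintype X] (p : X → ℝ) : TV p p = 0 := by simp [TV]

section Aux
variable {n : ℕ} (Z : Fin n → Type) [∀ k, Fintype (Z k)] [∀ k, Nonempty (Z k)]
  [∀ k, DecidableEq (Z k)]

lemma osc_nonneg (f : (∀ j, Z j) → ℝ) (j : Fin n) : 0 ≤ osc Z f j := by
  have := Finset.le_sup' (fun p : (∀ k, Z k) × Z j × Z j =>
    |f (Function.update p.1 j p.2.1) - f (Function.update p.1 j p.2.2)|)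
    (Finset.mem_univ (Classical.arbitrary _, Classical.arbitrary _, Classical.arbitrary _))
  exact le_trans (abs_nonneg _) this

lemma osc_le (f : (∀ j, Z j) → ℝ) (j : Fin n) (v : ∀ k, Z k) (x y : Z j) :
    |f (Function.update v j x) - f (Function.update v j y)| ≤ osc Z f j :=
  Finset.le_sup' (fun p : (∀ k, Z k) × Z j × Z j =>
    |f (Function.update p.1 j p.2.1) - f (Function.update p.1 j p.2.2)|)
    (Finset.mem_univ (v, x, y))

lemma sum_coord_eq (j : Fin n) (p : Z j → ℝ) (h : (∀ k, Z k) → ℝ)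
    (hh : ∀ v x, h (Function.update v j x) = h v) :
    (Fintype.card (Z j) : ℝ) * ∑ v, p (v j) * h v = (∑ x, p x) * ∑ v, h v := by
  have hinv : ∀ q : ((∀ k, Z k) × Z j),
      (fun q : ((∀ k, Z k) × Z j) => (Function.update q.1 j q.2, q.1 j))
      ((fun q : ((∀ k, Z k) × Z j) => (Function.update q.1 j q.2, q.1 j)) q) = q := by
    intro q
    simp [Function.update_idem, Function.update_eq_self]
  have key := Fintype.sum_equiv
    (⟨fun q => (Function.update q.1 j q.2, q.1 j),
      fun q => (Function.update q.1 j q.2, q.1 j), hinv, hinv⟩ :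
      ((∀ k, Z k) × Z j) ≃ ((∀ k, Z k) × Z j))
    (fun q : (∀ k, Z k) × Z j => p (q.1 j) * h q.1)
    (fun q : (∀ k, Z k) × Z j => p q.2 * h (Function.update q.1 j q.2))
    (fun q => by simp [Function.update_idem, Function.update_eq_self])
  rw [Fintype.sum_prod_type, Fintype.sum_prod_type] at key
  simp only [hh, Finset.sum_const, Finset.card_univ, nsmul_eq_mul] at key
  calc (Fintype.card (Z j) : ℝ) * ∑ v, p (v j) * h v
      = ∑ v, (Fintype.card (Z j) : ℝ) * (p (v j) * h v) := by rw [Finset.mul_sum]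
    _ = ∑ v, ∑ x : Z j, p x * h v := key
    _ = (∑ x, p x) * ∑ v, h v := by
        rw [Finset.mul_sum]
        exact Finset.sum_congr rfl fun v _ => by rw [← Finset.sum_mul]

end Aux

section Single
variable {n : ℕ} (Z : Fin n → Type) [∀ k, Fintype (Z k)] [∀ k, Nonempty (Z k)]
  [∀ k, DecidableEq (Z k)]

lemma single_swap (j : Fin n) (r : ∀ k, Z k → ℝ) (hr0 : ∀ k x, 0 ≤ r k x)
    (hr1 : ∀ k, ∑ x, r k x = 1) (q : Z j → ℝ) (hq1 : ∑ x, q x = 1)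
    (f : (∀ k, Z k) → ℝ) :
    |(∑ v, (∏ k, Function.update r j q k (v k)) * f v) -
      ∑ v, (∏ k, r k (v k)) * f v| ≤ TV q (r j) * osc Z f j := by
  classical
  set W : (∀ k, Z k) → ℝ := fun v => ∏ k ∈ Finset.univ.erase j, r k (v k) with hW
  have hW0 : ∀ v, 0 ≤ W v := fun v => Finset.prod_nonneg fun k _ => hr0 k _
  have hWinv : ∀ v x, W (Function.update v j x) = W v := by
    intro v x
    apply Finset.prod_congr rfl
    intro k hk
    rw [Function.update_of_ne (Finset.ne_of_mem_erase hk)]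
  have hprod : ∀ v, ∏ k, r k (v k) = r j (v j) * W v := fun v =>
    (Finset.mul_prod_erase Finset.univ _ (Finset.mem_univ j)).symm
  have hprod' : ∀ v, ∏ k, Function.update r j q k (v k) = q (v j) * W v := by
    intro v
    rw [← Finset.mul_prod_erase Finset.univ _ (Finset.mem_univ j)]
    simp only [Function.update_self]
    congr 1
    apply Finset.prod_congr rfl
    intro k hk
    rw [Function.update_of_ne (Finset.ne_of_mem_erase hk)]
  set M : (∀ k, Z k) → ℝ := fun v =>
    Finset.univ.sup' Finset.univ_nonempty (fun x : Z j => f (Function.update v j x)) with hM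
  set m : (∀ k, Z k) → ℝ := fun v =>
    Finset.univ.inf' Finset.univ_nonempty (fun x : Z j => f (Function.update v j x)) with hm
  set c : (∀ k, Z k) → ℝ := fun v => (M v + m v) / 2 with hc
  have hMinv : ∀ v x, M (Function.update v j x) = M v := by
    intro v x
    simp only [hM]
    apply Finset.sup'_congr _ rfl
    intro y _
    rw [Function.update_idem]
  have hminv : ∀ v x, m (Function.update v j x) = m v := by
    intro v x
    simp only [hm]
    apply Finset.inf'_congr _ rfl
    intro y _
    rw [Function.update_idem]
  have hcinv : ∀ v x, c (Function.update v j x) = c v := by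
    intro v x
    simp only [hc, hMinv, hminv]
  have hmf : ∀ v, m v ≤ f v := by
    intro v
    have h0 := Finset.inf'_le (fun x : Z j => f (Function.update v j x)) (Finset.mem_univ (v j))
    rw [Function.update_eq_self] at h0
    exact h0
  have hfM : ∀ v, f v ≤ M v := by
    intro v
    have h0 := Finset.le_sup' (fun x : Z j => f (Function.update v j x)) (Finset.mem_univ (v j))
    rw [Function.update_eq_self] at h0
    exact h0
  have hMm : ∀ v, M v - m v ≤ osc Z f j := by
    intro v
    rw [sub_le_iff_le_add]
    apply Finset.sup'_le
    intro x _
    have hinf : ∀ y ∈ Finset.univ, f (Function.update v j x) - osc Z f j ≤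
        f (Function.update v j y) := by
      intro y _
      have h1 := osc_le Z f j v x y
      have h2 := abs_le.mp h1
      linarith [h2.2]
    have := Finset.le_inf' Finset.univ_nonempty _ hinf
    simp only [hm]
    linarith
  have hfc : ∀ v, |f v - c v| ≤ osc Z f j / 2 := by
    intro v
    rw [abs_le]
    constructor
    · have := hmf v; have := hMm v; simp only [hc]; linarith
    · have := hfM v; have := hMm v; simp only [hc]; linarith
  have hsum1 : ∑ v : (∀ k, Z k), ∏ k, r k (v k) = 1 := by
    rw [← Fintype.piFinset_univ, ← Finset.prod_univ_sum]
    simp [hr1]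
  have hcardne : ((Fintype.card (Z j) : ℝ)) ≠ 0 := by
    exact_mod_cast Fintype.card_ne_zero
  have hsumW : ∑ v, W v = (Fintype.card (Z j) : ℝ) := by
    have h := sum_coord_eq Z j (r j) W hWinv
    rw [hr1 j, one_mul] at h
    have h2 : ∑ v, r j (v j) * W v = 1 := by
      rw [← hsum1]
      exact Finset.sum_congr rfl fun v _ => (hprod v).symm
    rw [h2, mul_one] at h
    exact h.symm
  have claim0 : ∑ v, (q (v j) - r j (v j)) * (W v * c v) = 0 := by
    have h := sum_coord_eq Z j (fun x => q x - r j x) (fun v => W v * c v)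
      (fun v x => by
        show W (Function.update v j x) * c (Function.update v j x) = W v * c v
        rw [hWinv, hcinv])
    have hz : ∑ x, (q x - r j x) = 0 := by
      rw [Finset.sum_sub_distrib, hq1, hr1]; ring
    rw [hz, zero_mul] at h
    exact (mul_eq_zero.mp h).resolve_left hcardne
  have habs : ∑ v, |q (v j) - r j (v j)| * W v = 2 * TV q (r j) := by
    have h := sum_coord_eq Z j (fun x => |q x - r j x|) W hWinv
    rw [hsumW] at h
    have h2 : ∑ v, |q (v j) - r j (v j)| * W v = ∑ x, |q x - r j x| := by
      have := mul_left_cancel₀ hcardne (h.trans (mul_comm _ _))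
      exact this
    rw [h2]
    unfold TV
    ring
  have hS : (∑ v, (∏ k, Function.update r j q k (v k)) * f v) -
      ∑ v, (∏ k, r k (v k)) * f v
      = ∑ v, (q (v j) - r j (v j)) * (W v * (f v - c v)) := by
    calc (∑ v, (∏ k, Function.update r j q k (v k)) * f v) -
        ∑ v, (∏ k, r k (v k)) * f v
        = ∑ v, (q (v j) - r j (v j)) * (W v * f v) := by
          rw [← Finset.sum_sub_distrib]
          exact Finset.sum_congr rfl fun v _ => by rw [hprod, hprod']; ring
      _ = (∑ v, (q (v j) - r j (v j)) * (W v * f v)) -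
          ∑ v, (q (v j) - r j (v j)) * (W v * c v) := by rw [claim0, sub_zero]
      _ = ∑ v, (q (v j) - r j (v j)) * (W v * (f v - c v)) := by
          rw [← Finset.sum_sub_distrib]
          exact Finset.sum_congr rfl fun v _ => by ring
  rw [hS]
  calc |∑ v, (q (v j) - r j (v j)) * (W v * (f v - c v))|
      ≤ ∑ v, |(q (v j) - r j (v j)) * (W v * (f v - c v))| :=
        Finset.abs_sum_le_sum_abs _ _
    _ ≤ ∑ v, |q (v j) - r j (v j)| * (W v * (osc Z f j / 2)) := by
        apply Finset.sum_le_sum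
        intro v _
        rw [abs_mul, abs_mul, abs_of_nonneg (hW0 v)]
        exact mul_le_mul_of_nonneg_left
          (mul_le_mul_of_nonneg_left (hfc v) (hW0 v)) (abs_nonneg _)
    _ = (osc Z f j / 2) * ∑ v, |q (v j) - r j (v j)| * W v := by
        rw [Finset.mul_sum]
        exact Finset.sum_congr rfl fun v _ => by ring
    _ = TV q (r j) * osc Z f j := by rw [habs]; ring

end Single

section Compare
variable {n : ℕ} (Z : Fin n → Type) [∀ k, Fintype (Z k)] [∀ k, Nonempty (Z k)]
  [∀ k, DecidableEq (Z k)]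

lemma prod_compare (f : (∀ k, Z k) → ℝ) (p r : ∀ k, Z k → ℝ)
    (hp0 : ∀ k x, 0 ≤ p k x) (hp1 : ∀ k, ∑ x, p k x = 1)
    (hr0 : ∀ k x, 0 ≤ r k x) (hr1 : ∀ k, ∑ x, r k x = 1) :
    |(∑ v, (∏ k, p k (v k)) * f v) - ∑ v, (∏ k, r k (v k)) * f v| ≤
      ∑ ℓ, TV (p ℓ) (r ℓ) * osc Z f ℓ := by
  classical
  suffices h : ∀ s : Finset (Fin n),
      |(∑ v, (∏ k, (if k ∈ s then p k else r k) (v k)) * f v) -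
        ∑ v, (∏ k, r k (v k)) * f v| ≤ ∑ ℓ ∈ s, TV (p ℓ) (r ℓ) * osc Z f ℓ by
    have h2 := h Finset.univ
    simpa using h2
  intro s
  induction s using Finset.induction_on with
  | empty => simp
  | @insert j s hj ih =>
    have hupd : (fun k => if k ∈ insert j s then p k else r k) =
        Function.update (fun k => if k ∈ s then p k else r k) j (p j) := by
      funext k
      by_cases hk : k = j
      · subst hk
        simp [hj]
      · rw [Function.update_of_ne hk]
        simp [hk, Finset.mem_insert]
    have hmix0 : ∀ k x, 0 ≤ (if k ∈ s then p k else r k) x := by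
      intro k x
      by_cases hk : k ∈ s <;> simp [hk, hp0 k x, hr0 k x]
    have hmix1 : ∀ k, ∑ x, (if k ∈ s then p k else r k) x = 1 := by
      intro k
      by_cases hk : k ∈ s <;> simp [hk, hp1 k, hr1 k]
    have hstep := single_swap Z j (fun k => if k ∈ s then p k else r k)
      hmix0 hmix1 (p j) (hp1 j) f
    rw [if_neg hj] at hstep
    calc |(∑ v, (∏ k, (if k ∈ insert j s then p k else r k) (v k)) * f v) -
        ∑ v, (∏ k, r k (v k)) * f v|
        ≤ |(∑ v, (∏ k, (if k ∈ insert j s then p k else r k) (v k)) * f v) -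
            ∑ v, (∏ k, (if k ∈ s then p k else r k) (v k)) * f v| +
          |(∑ v, (∏ k, (if k ∈ s then p k else r k) (v k)) * f v) -
            ∑ v, (∏ k, r k (v k)) * f v| := abs_sub_le _ _ _
      _ ≤ TV (p j) (r j) * osc Z f j + ∑ ℓ ∈ s, TV (p ℓ) (r ℓ) * osc Z f ℓ := by
          apply add_le_add _ ih
          have heq : (∑ v, (∏ k, (if k ∈ insert j s then p k else r k) (v k)) * f v) =
              ∑ v, (∏ k, Function.update (fun k => if k ∈ s then p k else r k) j (p j) k (v k)) * f v :=
            Finset.sum_congr rfl fun v _ => by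
              congr 1
              exact Finset.prod_congr rfl fun k _ => congrFun (congrFun hupd k) (v k)
          rw [heq]
          exact hstep
      _ = ∑ ℓ ∈ insert j s, TV (p ℓ) (r ℓ) * osc Z f ℓ := by
          rw [Finset.sum_insert hj]

end Compare

lemma osc_g_le {n : ℕ} (G : SimpleGraph (Fin n)) [DecidableRel G.Adj]
    (Z : Fin n → Type) [∀ k, Fintype (Z k)] [∀ k, Nonempty (Z k)] [∀ k, DecidableEq (Z k)]
    (P : ∀ k, (∀ j, Z j) → Z k → ℝ)
    (hPnonneg : ∀ k z x, 0 ≤ P k z x)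
    (hPsum : ∀ k z, ∑ x, P k z x = 1)
    (hPloc : ∀ k (z z' : ∀ j, Z j), (∀ j, (j = k ∨ G.Adj k j) → z j = z' j) → P k z = P k z')
    (f : (∀ k, Z k) → ℝ) (j : Fin n) :
    osc Z (fun w => ∑ v, (∏ k, P k w (v k)) * f v) j ≤
      ∑ ℓ, Cz G Z P ℓ j * osc Z f ℓ := by
  apply Finset.sup'_le
  rintro ⟨v, x, y⟩ -
  show |(∑ u, (∏ k, P k (Function.update v j x) (u k)) * f u) -
        ∑ u, (∏ k, P k (Function.update v j y) (u k)) * f u| ≤ _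
  calc |(∑ u, (∏ k, P k (Function.update v j x) (u k)) * f u) -
        ∑ u, (∏ k, P k (Function.update v j y) (u k)) * f u|
      ≤ ∑ ℓ, TV (P ℓ (Function.update v j x)) (P ℓ (Function.update v j y)) * osc Z f ℓ :=
        prod_compare Z f _ _ (fun k x' => hPnonneg k _ x') (fun k => hPsum k _)
          (fun k x' => hPnonneg k _ x') (fun k => hPsum k _)
    _ ≤ ∑ ℓ, Cz G Z P ℓ j * osc Z f ℓ := by
        apply Finset.sum_le_sum
        intro ℓ _
        by_cases hℓ : j = ℓ ∨ G.Adj ℓ j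
        · apply mul_le_mul_of_nonneg_right _ (osc_nonneg Z f ℓ)
          rw [Cz, if_pos hℓ]
          exact Finset.le_sup' (fun p : (∀ k, Z k) × Z j × Z j =>
            TV (P ℓ (Function.update p.1 j p.2.1)) (P ℓ (Function.update p.1 j p.2.2)))
            (Finset.mem_univ (v, x, y))
        · have hP : P ℓ (Function.update v j x) = P ℓ (Function.update v j y) := by
            apply hPloc
            intro m hm
            have hmj : m ≠ j := by
              rintro rfl
              exact hℓ hm
            rw [Function.update_of_ne hmj, Function.update_of_ne hmj]
          rw [hP, TV_self, Cz, if_neg hℓ, zero_mul]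

/-- **Lemma 4 (the induction step).** If the nonnegative vector `a` is `(t−1)`-compatible,
then `a' = C a` is `t`-compatible, where `C` is the matrix of the interaction
coefficients `C^z_{ij}` (so `a'_ℓ = ∑_{j ∈ N_ℓ} C^z_{ℓj} a_j`, the terms with `j ∉ N_ℓ`
vanishing since `C^z_{ℓj} = 0` there). -/
theorem compatible_induction
    {n : ℕ} (G : SimpleGraph (Fin n)) [DecidableRel G.Adj]
    (Z : Fin n → Type)
    [∀ k, Fintype (Z k)] [∀ k, Nonempty (Z k)] [∀ k, DecidableEq (Z k)]
    (P : ∀ k, (∀ j, Z j) → Z k → ℝ)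
    (hPnonneg : ∀ k z x, 0 ≤ P k z x)
    (hPsum : ∀ k z, ∑ x, P k z x = 1)
    (hPloc : ∀ k (z z' : ∀ j, Z j),
      (∀ j, (j = k ∨ G.Adj k j) → z j = z' j) → P k z = P k z')
    (z zt : ∀ j, Z j)
    (a : Fin n → ℝ) (ha : ∀ j, 0 ≤ a j) (t : ℕ)
    (hcompat : Compatible G Z (fun u v => ∏ k, P k u (v k)) z zt t a) :
    Compatible G Z (fun u v => ∏ k, P k u (v k)) z zt (t + 1)
      (fun ℓ => ∑ j, Cz G Z P ℓ j * a j) := by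
  intro i κ hκ f hf
  classical
  set K : (∀ j, Z j) → (∀ j, Z j) → ℝ := fun u v => ∏ k, P k u (v k) with hK
  set g : (∀ k, Z k) → ℝ := fun w => ∑ v, K w v * f v with hg
  have hstep : ∀ w0 : ∀ k, Z k,
      (∑ w, stepDist K (t + 1) w0 w * f w) = ∑ w, stepDist K t w0 w * g w := by
    intro w0
    simp only [stepDist]
    calc ∑ w, (∑ w', stepDist K t w0 w' * K w' w) * f w
        = ∑ w, ∑ w', stepDist K t w0 w' * K w' w * f w :=
          Finset.sum_congr rfl fun w _ => Finset.sum_mul _ _ _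
      _ = ∑ w', ∑ w, stepDist K t w0 w' * K w' w * f w := Finset.sum_comm
      _ = ∑ w', stepDist K t w0 w' * g w' := by
          refine Finset.sum_congr rfl fun w' _ => ?_
          rw [hg, Finset.mul_sum]
          exact Finset.sum_congr rfl fun w _ => by ring
  have hgloc : ∀ w w' : ∀ k, Z k,
      (∀ j, G.Reachable i j → G.dist i j ≤ κ + 1 → w j = w' j) → g w = g w' := by
    intro w w' hww'
    have hb := prod_compare Z f (fun k => P k w) (fun k => P k w')
      (fun k x => hPnonneg k w x) (fun k => hPsum k w)
      (fun k x => hPnonneg k w' x) (fun k => hPsum k w')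
    have hz : ∑ ℓ, TV (P ℓ w) (P ℓ w') * osc Z f ℓ = 0 := by
      apply Finset.sum_eq_zero
      intro ℓ _
      by_cases hre : G.Reachable i ℓ ∧ G.dist i ℓ ≤ κ
      · have hPe : P ℓ w = P ℓ w' := by
          apply hPloc
          intro m hm
          rcases hm with rfl | hadj
          · exact hww' m hre.1 (le_trans hre.2 (Nat.le_succ κ))
          · refine hww' m (hre.1.trans hadj.reachable) ?_
            obtain ⟨pw, hlen⟩ := hre.1.exists_walk_length_eq_dist
            have hd := SimpleGraph.dist_le (pw.concat hadj)
            rw [SimpleGraph.Walk.length_concat, hlen] at hd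
            omega
        rw [hPe, TV_self, zero_mul]
      · have hosc : osc Z f ℓ = 0 := by
          apply le_antisymm _ (osc_nonneg Z f ℓ)
          apply Finset.sup'_le
          rintro ⟨v, x, y⟩ -
          have hfeq : f (Function.update v ℓ x) = f (Function.update v ℓ y) := by
            apply hf
            intro m hm1 hm2
            have hmℓ : m ≠ ℓ := by
              rintro rfl
              exact hre ⟨hm1, hm2⟩
            rw [Function.update_of_ne hmℓ, Function.update_of_ne hmℓ]
          rw [hfeq, sub_self, abs_zero]
        rw [hosc, mul_zero]
    have hb' : |g w - g w'| ≤ 0 := by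
      rw [hz] at hb
      exact hb
    have h0 := abs_nonpos_iff.mp hb'
    linarith
  calc |(∑ w, stepDist K (t + 1) z w * f w) - ∑ w, stepDist K (t + 1) zt w * f w|
      = |(∑ w, stepDist K t z w * g w) - ∑ w, stepDist K t zt w * g w| := by
        rw [hstep z, hstep zt]
    _ ≤ ∑ j, a j * osc Z g j := hcompat i (κ + 1) (by omega) g hgloc
    _ ≤ ∑ j, a j * ∑ ℓ, Cz G Z P ℓ j * osc Z f ℓ := by
        apply Finset.sum_le_sum
        intro j _
        apply mul_le_mul_of_nonneg_left _ (ha j)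
        exact osc_g_le G Z P hPnonneg hPsum hPloc f j
    _ = ∑ ℓ, (∑ j, Cz G Z P ℓ j * a j) * osc Z f ℓ := by
        simp only [Finset.mul_sum, Finset.sum_mul]
        rw [Finset.sum_comm]
        exact Finset.sum_congr rfl fun ℓ _ => Finset.sum_congr rfl fun j _ => by ring
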